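/- Let S be a dense subsemigroup of ((0,∞),+), let (X, ⟨T_s⟩_{s∈S}) be a dynamical system, and let x, y ∈ X. If x and y are proximal near zero, then there exists a minimal left ideal L of O⁺(S) such that T_u(x) = T_u(y) for all u ∈ L. -/
import Mathlib


open Filter Topology Set

noncomputable section

/-- The extension of `+` on a discrete semigroup to its Stone–Čech compactification
(space of ultrafilters): `A ∈ p + q` iff `{x : -x + A ∈ q} ∈ p`. -/
def uadd {α : Type} [Add α] (p q : Ultrafilter α) : Ultrafilter α :=
  p.bind fun a => q.map (a + ·)

/-- `O⁺(S) = {p ∈ βS : for all ε > 0, S ∩ (0,ε) ∈ p}`. -/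
def Oplus (S : AddSubsemigroup ℝ) : Set (Ultrafilter S) :=
  {p | ∀ ε : ℝ, 0 < ε → {x : S | (x : ℝ) < ε} ∈ p}

def IsLeftIdealIn {α : Type} [Add α] (T L : Set (Ultrafilter α)) : Prop :=
  L.Nonempty ∧ L ⊆ T ∧ ∀ p ∈ T, ∀ q ∈ L, uadd p q ∈ L

def IsMinimalLeftIdealIn {α : Type} [Add α] (T L : Set (Ultrafilter α)) : Prop :=
  IsLeftIdealIn T L ∧ ∀ L', IsLeftIdealIn T L' → L' ⊆ L → L' = L

/-- The smallest ideal `K(O⁺(S))`, described as the union of all minimal left ideals. -/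
def KOplus (S : AddSubsemigroup ℝ) : Set (Ultrafilter S) :=
  {p | ∃ L, IsMinimalLeftIdealIn (Oplus S) L ∧ p ∈ L}

/-- A dynamical system over an additive semigroup. -/
structure DynSys (σ : Type) [Add σ] where
  X : Type
  [ts : TopologicalSpace X]
  [cs : CompactSpace X]
  [t2 : T2Space X]
  T : σ → X → X
  cont : ∀ s, Continuous (T s)
  comp : ∀ s t, T s ∘ T t = T (s + t)

attribute [instance] DynSys.ts DynSys.cs DynSys.t2

/-- `T_p(x) = p-lim_{s ∈ S} T_s(x)`. -/
def DynSys.Tp {σ : Type} [Add σ] (D : DynSys σ) (p : Ultrafilter σ) (x : D.X) : D.X :=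
  (p.map fun s => D.T s x).lim

/-- `B` is syndetic near zero. -/
def syndeticNearZero (S : AddSubsemigroup ℝ) (A : Set S) : Prop :=
  ∀ ε : ℝ, 0 < ε → ∃ F : Finset S, F.Nonempty ∧ (∀ t ∈ F, (t : ℝ) < ε) ∧
    ∃ δ : ℝ, 0 < δ ∧ ∀ s : S, (s : ℝ) < δ → ∃ t ∈ F, t + s ∈ A

def uniformlyRecurrentNearZero (S : AddSubsemigroup ℝ) (D : DynSys S) (x : D.X) : Prop :=
  ∀ W ∈ nhds x, syndeticNearZero S {s : S | D.T s x ∈ W}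

/-- `x` and `y` are proximal near zero. -/
def proximalNearZero (S : AddSubsemigroup ℝ) (D : DynSys S) (x y : D.X) : Prop :=
  ∀ U ∈ nhdsSet (Set.diagonal D.X), ∀ ε : ℝ, 0 < ε →
    ∃ s : S, (s : ℝ) < ε ∧ (D.T s x, D.T s y) ∈ U

/-- `A` is piecewise syndetic near zero. -/
def piecewiseSyndeticNearZero (S : AddSubsemigroup ℝ) (A : Set S) : Prop :=
  ∃ (F : ℕ → Finset S) (δ : ℕ → ℝ),
    (∀ n : ℕ, (F n).Nonempty ∧ (∀ t ∈ F n, (t : ℝ) < 1 / (n + 1)) ∧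
      0 < δ n ∧ δ n < 1 / (n + 1)) ∧
    ∀ G : Finset S, ∀ μ : ℝ, 0 < μ → ∃ x : S, (x : ℝ) < μ ∧
      ∀ n : ℕ, ∀ g ∈ G, (g : ℝ) < δ n → ∃ t ∈ F n, t + (g + x) ∈ A

/-- `A` is a J-set near zero. -/
def JSetNearZero (S : AddSubsemigroup ℝ) (A : Set S) : Prop :=
  ∀ F : Finset (ℕ → S), F.Nonempty →
    (∀ f ∈ F, Tendsto (fun n => ((f n : S) : ℝ)) atTop (nhds 0)) →
    ∀ δ : ℝ, 0 < δ → ∃ a : S, (a : ℝ) < δ ∧ ∃ H : Finset ℕ, H.Nonempty ∧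
      ∀ f ∈ F, ∃ b ∈ A, (b : ℝ) = (a : ℝ) + ∑ t ∈ H, ((f t : S) : ℝ)

def J0 (S : AddSubsemigroup ℝ) : Set (Ultrafilter S) :=
  {p | p ∈ Oplus S ∧ ∀ A ∈ p, JSetNearZero S A}

/-- jointly intermittently uniformly recurrent near zero. -/
def JIUR0 (S : AddSubsemigroup ℝ) (D : DynSys S) (x y : D.X) : Prop :=
  ∀ U ∈ nhds y, piecewiseSyndeticNearZero S {s : S | D.T s x ∈ U ∧ D.T s y ∈ U}

/-- jointly intermittently almost uniformly recurrent near zero. -/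
def JIAUR0 (S : AddSubsemigroup ℝ) (D : DynSys S) (x y : D.X) : Prop :=
  ∀ U ∈ nhds y, JSetNearZero S {s : S | D.T s x ∈ U ∧ D.T s y ∈ U}

section Aux

variable {σ : Type} [Add σ]

lemma mem_uadd {p q : Ultrafilter σ} {A : Set σ} :
    A ∈ uadd p q ↔ {a | {b | a + b ∈ A} ∈ q} ∈ p := by
  show A ∈ Filter.bind ↑p (fun a => ↑(q.map (a + ·))) ↔ _
  rw [Filter.mem_bind']
  rfl

lemma uadd_assoc {σ : Type} [AddSemigroup σ] (p q r : Ultrafilter σ) :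
    uadd (uadd p q) r = uadd p (uadd q r) := by
  ext A
  simp only [mem_uadd, Set.mem_setOf_eq, add_assoc]

lemma continuous_uadd_right (q : Ultrafilter σ) :
    Continuous fun p : Ultrafilter σ => uadd p q := by
  rw [ultrafilterBasis_is_basis.continuous_iff]
  rintro s ⟨A, rfl⟩
  have he : (fun p : Ultrafilter σ => uadd p q) ⁻¹' {u | A ∈ u}
      = {p : Ultrafilter σ | {a | {b | a + b ∈ A} ∈ q} ∈ p} := by
    ext p; exact mem_uadd
  rw [he]
  exact ultrafilter_isOpen_basic _

lemma tendsto_Tp (D : DynSys σ) (p : Ultrafilter σ) (z : D.X) :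
    Tendsto (fun s => D.T s z) ↑p (𝓝 (D.Tp p z)) :=
  (p.map fun s => D.T s z).le_nhds_lim

lemma Tp_eq_of_tendsto {D : DynSys σ} {p : Ultrafilter σ} {z : D.X} {c : D.X}
    (h : Tendsto (fun s => D.T s z) ↑p (𝓝 c)) : D.Tp p z = c :=
  tendsto_nhds_unique (tendsto_Tp D p z) h

lemma Tp_uadd (D : DynSys σ) (p q : Ultrafilter σ) (z : D.X) :
    D.Tp (uadd p q) z = D.Tp p (D.Tp q z) := by
  apply Tp_eq_of_tendsto
  rw [Filter.tendsto_def]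
  intro W hW
  obtain ⟨V, hVW, hVopen, hVmem⟩ := mem_nhds_iff.1 hW
  rw [Ultrafilter.mem_coe, mem_uadd]
  have h1 : {a : σ | D.T a (D.Tp q z) ∈ V} ∈ p :=
    tendsto_Tp D p _ (hVopen.mem_nhds hVmem)
  refine Filter.mem_of_superset h1 fun a ha => ?_
  have h2 : {b : σ | D.T b z ∈ (D.T a) ⁻¹' V} ∈ q :=
    tendsto_Tp D q z ((hVopen.preimage (D.cont a)).mem_nhds ha)
  refine Filter.mem_of_superset h2 fun b hb => ?_
  show D.T (a + b) z ∈ W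
  rw [← D.comp a b]
  exact hVW hb

lemma continuous_Tp (D : DynSys σ) (z : D.X) :
    Continuous fun p : Ultrafilter σ => D.Tp p z := by
  rw [continuous_iff_continuousAt]
  intro p
  rw [ContinuousAt, Filter.tendsto_def]
  intro W hW
  obtain ⟨V, hV, hVc, hVW⟩ := exists_mem_nhds_isClosed_subset hW
  have hA : {s : σ | D.T s z ∈ V} ∈ p := tendsto_Tp D p z hV
  refine mem_of_superset ((ultrafilter_isOpen_basic _).mem_nhds hA) ?_
  intro q hq
  exact hVW (hVc.mem_of_tendsto (tendsto_Tp D q z) (Filter.eventually_iff.2 hq))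

end Aux


section Main

variable (S : AddSubsemigroup ℝ)

lemma isClosed_Oplus : IsClosed (Oplus S) := by
  have : Oplus S = ⋂ (ε : ℝ) (_ : 0 < ε), {p : Ultrafilter S | {x : S | (x : ℝ) < ε} ∈ p} := by
    ext p
    simp [Oplus]
  rw [this]
  exact isClosed_iInter fun ε => isClosed_iInter fun _ => ultrafilter_isClosed_basic _

lemma uadd_mem_Oplus {p q : Ultrafilter S} (hp : p ∈ Oplus S) (hq : q ∈ Oplus S) :
    uadd p q ∈ Oplus S := by
  intro ε hε
  rw [mem_uadd]
  refine Filter.mem_of_superset (hp (ε / 2) (by linarith)) fun a ha => ?_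
  refine Filter.mem_of_superset (hq (ε / 2) (by linarith)) fun b hb => ?_
  have ha' : (a : ℝ) < ε / 2 := ha
  have hb' : (b : ℝ) < ε / 2 := hb
  show ((a + b : S) : ℝ) < ε
  push_cast
  linarith

end Main

theorem stmt6 (S : AddSubsemigroup ℝ)
    (hpos : ∀ x : ℝ, x ∈ S → 0 < x)
    (hdense : Set.Ioi (0 : ℝ) ⊆ closure (S : Set ℝ))
    (D : DynSys S) (x y : D.X)
    (h : proximalNearZero S D x y) :
    ∃ L, IsMinimalLeftIdealIn (Oplus S) L ∧ ∀ u ∈ L, D.Tp u x = D.Tp u y := by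
  classical
  -- Step 1: find `v ∈ Oplus S` with `D.Tp v x = D.Tp v y`.
  set f : Filter S := Filter.comap (fun s : S => (D.T s x, D.T s y)) (𝓝ˢ (Set.diagonal D.X)) ⊓
    Filter.comap (Subtype.val : S → ℝ) (𝓝[>] (0 : ℝ)) with hfdef
  have hfne : f.NeBot := by
    rw [Filter.inf_neBot_iff]
    intro t1 ht1 t2 ht2
    obtain ⟨U, hU, hU1⟩ := Filter.mem_comap.1 ht1
    obtain ⟨t', ht', ht'1⟩ := Filter.mem_comap.1 ht2
    obtain ⟨ε, hε, hIoo⟩ := (nhdsGT_basis (0 : ℝ)).mem_iff.1 ht'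
    obtain ⟨s, hsε, hsU⟩ := h U hU ε hε
    exact ⟨s, hU1 hsU, ht'1 (hIoo ⟨hpos _ s.2, hsε⟩)⟩
  obtain ⟨v, hv⟩ := Filter.exists_ultrafilter_le f
  have hvO : v ∈ Oplus S := by
    intro ε hε
    have hm : (Subtype.val : S → ℝ) ⁻¹' Set.Iio ε ∈ f :=
      Filter.mem_inf_of_right
        (Filter.preimage_mem_comap (mem_nhdsWithin_of_mem_nhds (Iio_mem_nhds hε)))
    exact hv hm
  have hvxy : D.Tp v x = D.Tp v y := by
    by_contra hne
    obtain ⟨V, W, hVo, hWo, hzV, hwW, hVW⟩ := t2_separation hne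
    obtain ⟨C, hC, hCc, hCV⟩ := exists_mem_nhds_isClosed_subset (hVo.mem_nhds hzV)
    obtain ⟨Dd, hDd, hDdc, hDdW⟩ := exists_mem_nhds_isClosed_subset (hWo.mem_nhds hwW)
    have hUnhds : (C ×ˢ Dd)ᶜ ∈ 𝓝ˢ (Set.diagonal D.X) := by
      refine (hCc.prod hDdc).isOpen_compl.mem_nhdsSet.2 ?_
      rintro ⟨a, b⟩ hab
      rcases hab with hab
      intro hmem
      rcases hmem with ⟨h1, h2⟩
      exact Set.disjoint_left.1 hVW (hCV h1) (hDdW (hab ▸ h2))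
    have h1 : {s : S | (D.T s x, D.T s y) ∈ (C ×ˢ Dd)ᶜ} ∈ v :=
      hv (Filter.mem_inf_of_left (Filter.preimage_mem_comap hUnhds))
    have h2 : {s : S | D.T s x ∈ C} ∈ v := tendsto_Tp D v x hC
    have h3 : {s : S | D.T s y ∈ Dd} ∈ v := tendsto_Tp D v y hDd
    obtain ⟨s, hs1, hs2, hs3⟩ :=
      Filter.nonempty_of_mem (Filter.inter_mem h1 (Filter.inter_mem h2 h3))
    exact hs1 ⟨hs2, hs3⟩
  -- Step 2: `E` is a closed left ideal of `Oplus S`.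
  set E : Set (Ultrafilter S) := {u | u ∈ Oplus S ∧ D.Tp u x = D.Tp u y} with hEdef
  have hEclosed : IsClosed E := by
    have hrw : E = Oplus S ∩ {u : Ultrafilter S | D.Tp u x = D.Tp u y} := rfl
    rw [hrw]
    exact (isClosed_Oplus S).inter (isClosed_eq (continuous_Tp D x) (continuous_Tp D y))
  have hEideal : IsLeftIdealIn (Oplus S) E :=
    ⟨⟨v, hvO, hvxy⟩, fun u hu => hu.1, fun p hp q hq =>
      ⟨uadd_mem_Oplus S hp hq.1, by rw [Tp_uadd, Tp_uadd, hq.2]⟩⟩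
  -- Step 3: Zorn's lemma on closed left ideals contained in `E`.
  set 𝒞 : Set (Set (Ultrafilter S)) :=
    {L | IsLeftIdealIn (Oplus S) L ∧ IsClosed L ∧ L ⊆ E} with h𝒞def
  have hzorn : ∃ m, m ⊆ E ∧ Minimal (· ∈ 𝒞) m := by
    refine zorn_superset_nonempty 𝒞 ?_ E ⟨hEideal, hEclosed, subset_rfl⟩
    intro c hc hchain hcne
    refine ⟨⋂₀ c, ?_, fun L hL => Set.sInter_subset_of_mem hL⟩
    have hdir : DirectedOn (· ⊇ ·) c := by
      intro a ha b hb
      rcases hchain.total ha hb with hab | hba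
      · exact ⟨a, ha, subset_rfl, hab⟩
      · exact ⟨b, hb, hba, subset_rfl⟩
    haveI : Nonempty c := hcne.to_subtype
    have hnonempty : (⋂₀ c).Nonempty :=
      IsCompact.nonempty_sInter_of_directed_nonempty_isCompact_isClosed hdir
        (fun L hL => (hc hL).1.1) (fun L hL => (hc hL).2.1.isCompact)
        (fun L hL => (hc hL).2.1)
    obtain ⟨L0, hL0⟩ := hcne
    refine ⟨⟨hnonempty, ?_, ?_⟩, isClosed_sInter fun L hL => (hc hL).2.1, ?_⟩
    · exact (Set.sInter_subset_of_mem hL0).trans (hc hL0).1.2.1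
    · intro p hp q hq
      exact Set.mem_sInter.2 fun L hL => (hc hL).1.2.2 p hp q (hq L hL)
    · exact (Set.sInter_subset_of_mem hL0).trans (hc hL0).2.2
  obtain ⟨M, hME, hMmin⟩ := hzorn
  have hMC : M ∈ 𝒞 := hMmin.1
  refine ⟨M, ⟨hMC.1, ?_⟩, fun u hu => (hMC.2.2 hu).2⟩
  intro L' hL' hsub
  obtain ⟨q, hq⟩ := hL'.1
  have hq0 : q ∈ Oplus S := hL'.2.1 hq
  set L'' : Set (Ultrafilter S) := (fun p => uadd p q) '' Oplus S ∪ {q} with hL''def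
  have hL''sub : L'' ⊆ L' := by
    rintro r (⟨p, hp, rfl⟩ | rfl)
    · exact hL'.2.2 p hp q hq
    · exact hq
  have hL''C : L'' ∈ 𝒞 := by
    refine ⟨⟨⟨q, Or.inr rfl⟩, ?_, ?_⟩, ?_, hL''sub.trans (hsub.trans hMC.2.2)⟩
    · rintro r (⟨p, hp, rfl⟩ | rfl)
      · exact uadd_mem_Oplus S hp hq0
      · exact hq0
    · intro p hp r hr
      rcases hr with ⟨p', hp', rfl⟩ | rfl
      · rw [← uadd_assoc]
        exact Or.inl ⟨uadd p p', uadd_mem_Oplus S hp hp', rfl⟩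
      · exact Or.inl ⟨p, hp, rfl⟩
    · exact IsCompact.isClosed
        ((((isClosed_Oplus S).isCompact).image (continuous_uadd_right q)).union
          isCompact_singleton)
  have hML'' : M ⊆ L'' := hMmin.2 hL''C (hL''sub.trans hsub)
  exact subset_antisymm hsub (hML''.trans hL''sub)
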